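/- arXiv:2406.09576 — 3 statements merged into one kernel-verified Lean document; each statement's English description precedes it below -/
import Mathlib

section
/- Let a < c ∈ ℝ and g : (a, c) → (a, c) be an orientation-preserving C^k diffeomorphism (1 ≤ k ≤ ∞). Then there exist ε > 0 and a C^k diffeomorphism p : (a, c) → (a, c) such that p(x) = x for x ∈ (a, a + ε] and p(x) = g(x) for x ∈ [c − ε, c). -/
open Set Real Filter
open scoped Topology

lemma expNegInvGlue_monotone : Monotone expNegInvGlue := by
  intro x y hxy
  rcases le_or_gt y 0 with hy | hy
  · rw [expNegInvGlue.zero_of_nonpos (hxy.trans hy), expNegInvGlue.zero_of_nonpos hy]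
  rcases le_or_gt x 0 with hx | hx
  · rw [expNegInvGlue.zero_of_nonpos hx]
    exact expNegInvGlue.nonneg y
  · unfold expNegInvGlue
    rw [if_neg hx.not_ge, if_neg (hxy.trans_lt' hx).not_ge]
    have : y⁻¹ ≤ x⁻¹ := by gcongr
    exact Real.exp_le_exp.2 (by linarith)

lemma smoothTransition_monotone : Monotone Real.smoothTransition := by
  intro x y hxy
  unfold Real.smoothTransition
  rw [div_le_div_iff₀ (Real.smoothTransition.pos_denom x) (Real.smoothTransition.pos_denom y)]
  have h1 := expNegInvGlue_monotone hxy
  have h2 := expNegInvGlue_monotone (by linarith : (1:ℝ) - y ≤ 1 - x)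
  nlinarith [expNegInvGlue.nonneg x, expNegInvGlue.nonneg y,
    expNegInvGlue.nonneg (1-x), expNegInvGlue.nonneg (1-y)]

lemma deriv_nonneg_of_monotone {f : ℝ → ℝ} (hf : Monotone f) (x : ℝ) : 0 ≤ deriv f x := by
  by_cases hd : DifferentiableAt ℝ f x
  · have h := hasDerivAt_iff_tendsto_slope.1 hd.hasDerivAt
    refine ge_of_tendsto h ?_
    filter_upwards [self_mem_nhdsWithin] with y hy
    rcases lt_or_gt_of_ne (show y ≠ x from hy) with h' | h'
    · rw [slope_def_field]
      exact div_nonneg_iff.2 (Or.inr ⟨by simpa using sub_nonpos.2 (hf h'.le), by linarith⟩)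
    · rw [slope_def_field]
      exact div_nonneg (sub_nonneg.2 (hf h'.le)) (by linarith)
  · rw [deriv_zero_of_not_differentiableAt hd]


noncomputable def tr (s t x : ℝ) : ℝ := Real.smoothTransition ((x - s) / (t - s))

lemma tr_contDiff {n : ℕ∞} (s t : ℝ) : ContDiff ℝ n (tr s t) :=
  Real.smoothTransition.contDiff.comp ((contDiff_id.sub contDiff_const).div_const _)

lemma tr_zero {s t x : ℝ} (hst : s < t) (h : x ≤ s) : tr s t x = 0 :=
  Real.smoothTransition.zero_of_nonpos
    (div_nonpos_iff.2 (Or.inr ⟨by linarith, by linarith⟩))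

lemma tr_one {s t x : ℝ} (hst : s < t) (h : t ≤ x) : tr s t x = 1 :=
  Real.smoothTransition.one_of_one_le ((le_div_iff₀ (by linarith)).2 (by linarith))

lemma tr_nonneg (s t x : ℝ) : 0 ≤ tr s t x := Real.smoothTransition.nonneg _

lemma tr_le_one (s t x : ℝ) : tr s t x ≤ 1 := Real.smoothTransition.le_one _

lemma tr_monotone {s t : ℝ} (hst : s < t) : Monotone (tr s t) := by
  intro x y hxy
  exact smoothTransition_monotone (by gcongr)

lemma tr_deriv_nonneg {s t : ℝ} (hst : s < t) (x : ℝ) : 0 ≤ deriv (tr s t) x :=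
  deriv_nonneg_of_monotone (tr_monotone hst) x

lemma tr_deriv_left {s t x : ℝ} (hst : s < t) (hx : x < s) : deriv (tr s t) x = 0 := by
  have h : tr s t =ᶠ[𝓝 x] fun _ => (0:ℝ) := by
    filter_upwards [Iio_mem_nhds hx] with y hy
    exact tr_zero hst (le_of_lt hy)
  rw [h.deriv_eq, deriv_const]

lemma tr_deriv_right {s t x : ℝ} (hst : s < t) (hx : t < x) : deriv (tr s t) x = 0 := by
  have h : tr s t =ᶠ[𝓝 x] fun _ => (1:ℝ) := by
    filter_upwards [Ioi_mem_nhds hx] with y hy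
    exact tr_one hst (le_of_lt hy)
  rw [h.deriv_eq, deriv_const]

lemma tr_hasDerivAt {s t : ℝ} (x : ℝ) : HasDerivAt (tr s t) (deriv (tr s t) x) x :=
  (((tr_contDiff (n := 1) s t).differentiable one_ne_zero) x).hasDerivAt
/-- Interpolation lemma: any orientation-preserving `C^k` diffeomorphism `g` of
an open interval `(a, c)` can be glued with the identity: there are `ε > 0` and
a `C^k` diffeomorphism `p` of `(a, c)` with `p = id` on `(a, a + ε]` and
`p = g` on `[c − ε, c)`. -/
theorem glue_id_and_diffeo (a c : ℝ) (hac : a < c) (k : ℕ∞) (hk : 1 ≤ k)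
    (g : ℝ → ℝ)
    (hbij : BijOn g (Ioo a c) (Ioo a c))
    (hmono : StrictMonoOn g (Ioo a c))
    (hsmooth : ContDiffOn ℝ k g (Ioo a c))
    (hderiv : ∀ x ∈ Ioo a c, deriv g x ≠ 0) :
    ∃ ε > 0, ∃ p : ℝ → ℝ,
      BijOn p (Ioo a c) (Ioo a c) ∧
      StrictMonoOn p (Ioo a c) ∧
      ContDiffOn ℝ k p (Ioo a c) ∧
      (∀ x ∈ Ioo a c, deriv p x ≠ 0) ∧
      (∀ x ∈ Ioc a (a + ε) ∩ Ioo a c, p x = x) ∧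
      (∀ x ∈ Ico (c - ε) c ∩ Ioo a c, p x = g x) := by
  obtain ⟨s1, t1, has1, hs1t1, ht1c⟩ : ∃ s1 t1, a < s1 ∧ s1 < t1 ∧ t1 < c :=
    ⟨a + (c - a)/4, a + (c - a)/2, by linarith, by linarith, by linarith⟩
  obtain ⟨s2, t2, ht1s2, hs2t2, ht2c, hgs2t1⟩ :
      ∃ s2 t2, t1 < s2 ∧ s2 < t2 ∧ t2 < c ∧ t1 < g s2 := by
    obtain ⟨z, hz, hgz⟩ := hbij.surjOn
      (show (t1 + c)/2 ∈ Ioo a c from ⟨by linarith, by linarith⟩)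
    have hmc : max z ((t1 + c)/2) < c := max_lt hz.2 (by linarith)
    have hmt : t1 < max z ((t1 + c)/2) :=
      lt_of_lt_of_le (by linarith) (le_max_right _ _)
    refine ⟨max z ((t1 + c)/2), (max z ((t1 + c)/2) + c)/2, hmt, by linarith, by linarith, ?_⟩
    have hle : g z ≤ g (max z ((t1 + c)/2)) :=
      hmono.monotoneOn hz ⟨by linarith, hmc⟩ (le_max_left _ _)
    rw [hgz] at hle
    linarith
  have hs2mem : s2 ∈ Ioo a c := ⟨by linarith, by linarith⟩
  have hgs2mem : g s2 ∈ Ioo a c := hbij.mapsTo hs2mem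
  obtain ⟨lam, hlam0, hlam1, hmt2⟩ :
      ∃ lam, 0 < lam ∧ lam ≤ 1 ∧ t1 + lam * (t2 - s1) ≤ g s2 := by
    refine ⟨min 1 ((g s2 - t1)/(t2 - s1)),
      lt_min one_pos (div_pos (by linarith) (by linarith)), min_le_left _ _, ?_⟩
    have h := min_le_right 1 ((g s2 - t1)/(t2 - s1))
    rw [le_div_iff₀ (by linarith : (0:ℝ) < t2 - s1)] at h
    linarith
  -- the glued map
  set P : ℝ → ℝ := fun x =>
    x + tr s1 t1 x * ((t1 + lam * (x - s1)) - x)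
      + tr s2 t2 x * (g x - (t1 + lam * (x - s1))) with hP
  -- basic facts about g
  have hgdiff : ∀ x ∈ Ioo a c, HasDerivAt g (deriv g x) x := fun x hx =>
    ((hsmooth.differentiableOn (by exact_mod_cast (one_pos.trans_le hk).ne')).differentiableAt (isOpen_Ioo.mem_nhds hx)).hasDerivAt
  have hgpos : ∀ x ∈ Ioo a c, 0 < deriv g x := by
    intro x hx
    rcases (hderiv x hx).lt_or_gt with h | h
    · exfalso
      have h2 := hasDerivAt_iff_tendsto_slope.1 (hgdiff x hx)
      have h3 : 0 ≤ deriv g x := by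
        refine ge_of_tendsto h2 ?_
        filter_upwards [self_mem_nhdsWithin,
          nhdsWithin_le_nhds (isOpen_Ioo.mem_nhds hx)] with y hy hymem
        rcases lt_or_gt_of_ne (show y ≠ x from hy) with h' | h'
        · rw [slope_def_field]
          exact div_nonneg_iff.2 (Or.inr ⟨sub_nonpos.2 (hmono hymem hx h').le, by linarith⟩)
        · rw [slope_def_field]
          exact div_nonneg (sub_nonneg.2 (hmono hx hymem h').le) (by linarith)
      linarith
    · exact h
  -- values on the two end regions
  have hpid : ∀ x, x ≤ s1 → P x = x := by
    intro x hx
    rw [hP]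
    simp only [tr_zero hs1t1 hx, tr_zero hs2t2 (by linarith : x ≤ s2), zero_mul, add_zero]
  have hpg : ∀ x, t2 ≤ x → P x = g x := by
    intro x hx
    rw [hP]
    simp only [tr_one hs1t1 (by linarith : t1 ≤ x), tr_one hs2t2 hx, one_mul]
    ring
  -- m x - x is nonneg left of t1
  have hmxx : ∀ x, x ≤ t1 → 0 ≤ (t1 + lam * (x - s1)) - x := by
    intro x hx
    rcases le_or_gt x s1 with h | h
    · have h2 : lam * (s1 - x) ≤ 1 * (s1 - x) :=
        mul_le_mul_of_nonneg_right hlam1 (by linarith)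
      have h3 : lam * (x - s1) = -(lam * (s1 - x)) := by ring
      linarith
    · have h2 : 0 ≤ lam * (x - s1) := mul_nonneg hlam0.le (by linarith)
      linarith
  -- derivative of P
  have hmd : ∀ x : ℝ, HasDerivAt (fun x => t1 + lam * (x - s1)) lam x := by
    intro x
    simpa using (((hasDerivAt_id x).sub_const s1).const_mul lam).const_add t1
  have hPd : ∀ x ∈ Ioo a c, HasDerivAt P
      (1 + (deriv (tr s1 t1) x * ((t1 + lam * (x - s1)) - x) + tr s1 t1 x * (lam - 1))
        + (deriv (tr s2 t2) x * (g x - (t1 + lam * (x - s1)))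
            + tr s2 t2 x * (deriv g x - lam))) x := by
    intro x hx
    rw [hP]
    exact ((hasDerivAt_id' (x := x)).add
      ((tr_hasDerivAt x).mul ((hmd x).sub (hasDerivAt_id x)))).add
      ((tr_hasDerivAt x).mul ((hgdiff x hx).sub (hmd x)))
  have hPpos : ∀ x ∈ Ioo a c, 0 < deriv P x := by
    intro x hx
    rw [(hPd x hx).deriv]
    have hq1a := tr_nonneg s1 t1 x
    have hq1b := tr_le_one s1 t1 x
    have hq2a := tr_nonneg s2 t2 x
    have hq2b := tr_le_one s2 t2 x
    have hd1 := tr_deriv_nonneg hs1t1 x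
    have hd2 := tr_deriv_nonneg hs2t2 x
    rcases le_or_gt x t1 with hcase | hcase
    · rw [tr_zero hs2t2 (by linarith : x ≤ s2), tr_deriv_left hs2t2 (by linarith : x < s2)]
      have h1 : 0 ≤ deriv (tr s1 t1) x * ((t1 + lam * (x - s1)) - x) :=
        mul_nonneg hd1 (hmxx x hcase)
      have h2 : 1 * (lam - 1) ≤ tr s1 t1 x * (lam - 1) :=
        mul_le_mul_of_nonpos_right hq1b (by linarith)
      simp only [zero_mul, mul_zero, add_zero]
      linarith
    · rw [tr_one hs1t1 hcase.le, tr_deriv_right hs1t1 hcase]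
      simp only [zero_mul, one_mul]
      rcases lt_or_ge x s2 with hc2 | hc2
      · rw [tr_zero hs2t2 hc2.le, tr_deriv_left hs2t2 hc2]
        simp only [zero_mul, mul_zero]
        linarith
      · have hgx : 0 < deriv g x := hgpos x hx
        rcases le_or_gt x t2 with hc3 | hc3
        · have hgm : 0 ≤ g x - (t1 + lam * (x - s1)) := by
            have h4 : g s2 ≤ g x := hmono.monotoneOn hs2mem hx hc2
            have h5 : lam * (x - s1) ≤ lam * (t2 - s1) :=
              mul_le_mul_of_nonneg_left (by linarith) hlam0.le
            linarith
          have h6 : 0 ≤ deriv (tr s2 t2) x * (g x - (t1 + lam * (x - s1))) :=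
            mul_nonneg hd2 hgm
          rcases le_or_gt lam (deriv g x) with h7 | h7
          · nlinarith [mul_nonneg hq2a (by linarith : 0 ≤ deriv g x - lam)]
          · have h8 : 1 * (deriv g x - lam) ≤ tr s2 t2 x * (deriv g x - lam) :=
              mul_le_mul_of_nonpos_right hq2b (by linarith)
            linarith
        · rw [tr_one hs2t2 hc3.le, tr_deriv_right hs2t2 hc3]
          simp only [zero_mul, one_mul]
          linarith
  -- smoothness
  have hPk : ContDiffOn ℝ k P (Ioo a c) := by
    rw [hP]
    have hmk : ContDiff ℝ k (fun x : ℝ => t1 + lam * (x - s1)) :=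
      contDiff_const.add (contDiff_const.mul (contDiff_id.sub contDiff_const))
    exact (contDiffOn_id.add
        ((tr_contDiff s1 t1).contDiffOn.mul (hmk.contDiffOn.sub contDiffOn_id))).add
      ((tr_contDiff s2 t2).contDiffOn.mul (hsmooth.sub hmk.contDiffOn))
  have hPc : ContinuousOn P (Ioo a c) := hPk.continuousOn
  have hPmono : StrictMonoOn P (Ioo a c) :=
    strictMonoOn_of_deriv_pos (convex_Ioo a c) hPc
      (fun x hx => hPpos x (by rwa [interior_Ioo] at hx))
  -- maps to
  have hmaps : MapsTo P (Ioo a c) (Ioo a c) := by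
    intro x hx
    rcases le_or_gt x s1 with h | h
    · rw [hpid x h]; exact hx
    rcases le_or_gt x t1 with h2 | h2
    · have hPx : P x = x + tr s1 t1 x * ((t1 + lam * (x - s1)) - x) := by
        rw [hP]
        simp only [tr_zero hs2t2 (by linarith : x ≤ s2), zero_mul, add_zero]
      constructor
      · rw [hPx]
        nlinarith [mul_nonneg (tr_nonneg s1 t1 x) (hmxx x h2), hx.1]
      · rw [hPx]
        have hub : tr s1 t1 x * ((t1 + lam * (x - s1)) - x) ≤ (t1 + lam * (x - s1)) - x := by
          nlinarith [hmxx x h2, tr_le_one s1 t1 x]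
        have h5 : lam * (x - s1) ≤ lam * (t2 - s1) :=
          mul_le_mul_of_nonneg_left (by linarith) hlam0.le
        linarith [hgs2mem.2]
    rcases le_or_gt x s2 with h3 | h3
    · have hPx : P x = t1 + lam * (x - s1) := by
        rw [hP]
        simp only [tr_one hs1t1 h2.le, tr_zero hs2t2 h3, one_mul, zero_mul, add_zero]
        ring
      constructor
      · rw [hPx]
        nlinarith [mul_nonneg hlam0.le (by linarith : (0:ℝ) ≤ x - s1)]
      · rw [hPx]
        have h5 : lam * (x - s1) ≤ lam * (t2 - s1) :=
          mul_le_mul_of_nonneg_left (by linarith) hlam0.le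
        linarith [hgs2mem.2]
    rcases le_or_gt x t2 with h4 | h4
    · have hPx : P x = (t1 + lam * (x - s1))
          + tr s2 t2 x * (g x - (t1 + lam * (x - s1))) := by
        rw [hP]
        simp only [tr_one hs1t1 (by linarith : t1 ≤ x), one_mul]
        ring
      have hgm : 0 ≤ g x - (t1 + lam * (x - s1)) := by
        have h5 : g s2 ≤ g x := hmono.monotoneOn hs2mem hx h3.le
        have h6 : lam * (x - s1) ≤ lam * (t2 - s1) :=
          mul_le_mul_of_nonneg_left (by linarith) hlam0.le
        linarith
      constructor
      · rw [hPx]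
        nlinarith [mul_nonneg (tr_nonneg s2 t2 x) hgm,
          mul_nonneg hlam0.le (by linarith : (0:ℝ) ≤ x - s1)]
      · rw [hPx]
        have h7 : tr s2 t2 x * (g x - (t1 + lam * (x - s1)))
            ≤ g x - (t1 + lam * (x - s1)) := by
          nlinarith [tr_le_one s2 t2 x]
        linarith [(hbij.mapsTo hx).2]
    · rw [hpg x h4.le]; exact hbij.mapsTo hx
  -- surjectivity
  have hsurj : SurjOn P (Ioo a c) (Ioo a c) := by
    intro y hy
    obtain ⟨x1, hx1a, hx1y, hx1s1⟩ : ∃ x1, a < x1 ∧ x1 ≤ y ∧ x1 ≤ s1 := by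
      have hmm : a < min y s1 := lt_min hy.1 has1
      exact ⟨(a + min y s1)/2, by linarith,
        by linarith [min_le_left y s1], by linarith [min_le_right y s1]⟩
    obtain ⟨z2, hz2mem, hz2gt, hz2y⟩ : ∃ z2, z2 ∈ Ioo a c ∧ t2 < z2 ∧ y ≤ P z2 := by
      have hgt2 := hbij.mapsTo (show t2 ∈ Ioo a c from ⟨by linarith, ht2c⟩)
      have hmaxc : max y (g t2) < c := max_lt hy.2 hgt2.2
      have hvmem : (max y (g t2) + c)/2 ∈ Ioo a c :=
        ⟨by linarith [le_max_left y (g t2)], by linarith⟩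
      obtain ⟨z2, hz2, hgz2⟩ := hbij.surjOn hvmem
      have hz2gt : t2 < z2 := by
        by_contra hle
        push_neg at hle
        have h1 : g z2 ≤ g t2 := hmono.monotoneOn hz2 ⟨by linarith, ht2c⟩ hle
        rw [hgz2] at h1
        linarith [le_max_right y (g t2)]
      refine ⟨z2, hz2, hz2gt, ?_⟩
      rw [hpg z2 hz2gt.le, hgz2]
      linarith [le_max_left y (g t2)]
    have hx1z2 : x1 ≤ z2 := by linarith
    have hsub : Icc x1 z2 ⊆ Ioo a c := fun w hw =>
      ⟨lt_of_lt_of_le hx1a hw.1, lt_of_le_of_lt hw.2 hz2mem.2⟩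
    have hmem : y ∈ Icc (P x1) (P z2) := ⟨by rw [hpid x1 hx1s1]; exact hx1y, hz2y⟩
    obtain ⟨w, hw, hwy⟩ := intermediate_value_Icc hx1z2 (hPc.mono hsub) hmem
    exact ⟨w, hsub hw, hwy⟩
  refine ⟨min (s1 - a) (c - t2), lt_min (by linarith) (by linarith), P,
    ⟨hmaps, hPmono.injOn, hsurj⟩, hPmono, hPk,
    fun x hx => (hPpos x hx).ne', ?_, ?_⟩
  · rintro x ⟨⟨hx1, hx2⟩, hx3⟩
    apply hpid
    have := min_le_left (s1 - a) (c - t2)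
    linarith
  · rintro x ⟨⟨hx1, hx2⟩, hx3⟩
    apply hpg
    have := min_le_right (s1 - a) (c - t2)
    linarith
end

section
/- Let a, b, n with 2 ≤ n, a ≠ 1, b ≠ 1, a, b > 0, and let f be a C^n diffeomorphism of ℝ with f(0) = 0 such that q = w_b ∘ f ∘ w_a is C¹ (where w_c(x) = x for x ≤ 0 and c·x for x > 0). Then q is C^n if and only if f''(0) = f'''(0) = ⋯ = f^{(n)}(0) = 0. -/
open Set

/-- The piecewise-linear homeomorphism `w_a` of `ℝ`: the identity on `(−∞, 0]`
and multiplication by `a` on `[0, ∞)`. -/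
noncomputable def wPL (a : ℝ) : ℝ → ℝ := fun x => if x ≤ 0 then x else a * x

lemma glue_hasDerivAt (g₁ g₂ : ℝ → ℝ) (h₁ : Differentiable ℝ g₁) (h₂ : Differentiable ℝ g₂)
    (h0 : g₁ 0 = g₂ 0) (hd : deriv g₁ 0 = deriv g₂ 0) (x : ℝ) :
    HasDerivAt (fun x => if x ≤ 0 then g₁ x else g₂ x)
      (if x ≤ 0 then deriv g₁ x else deriv g₂ x) x := by
  rcases lt_trichotomy x 0 with hx | rfl | hx
  · rw [if_pos hx.le]
    refine ((h₁ x).hasDerivAt).congr_of_eventuallyEq ?_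
    filter_upwards [Iio_mem_nhds hx] with y hy
    rw [if_pos (le_of_lt hy)]
  · rw [if_pos le_rfl]
    have hL : HasDerivWithinAt (fun x => if x ≤ 0 then g₁ x else g₂ x) (deriv g₁ 0) (Iic 0) 0 := by
      refine ((h₁ 0).hasDerivAt.hasDerivWithinAt).congr (fun y hy => ?_) (by simp)
      rw [if_pos (mem_Iic.mp hy)]
    have hR : HasDerivWithinAt (fun x => if x ≤ 0 then g₁ x else g₂ x) (deriv g₁ 0) (Ici 0) 0 := by
      rw [hd]
      refine ((h₂ 0).hasDerivAt.hasDerivWithinAt).congr (fun y hy => ?_) (by simp [h0])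
      by_cases hy0 : y ≤ 0
      · have : y = 0 := le_antisymm hy0 (mem_Ici.mp hy)
        simp [this, h0]
      · rw [if_neg hy0]
    have := hL.union hR
    rw [Iic_union_Ici] at this
    exact hasDerivWithinAt_univ.mp this
  · rw [if_neg (not_le.mpr hx)]
    refine ((h₂ x).hasDerivAt).congr_of_eventuallyEq ?_
    filter_upwards [Ioi_mem_nhds hx] with y hy
    rw [if_neg (not_le.mpr hy)]

lemma glue_contDiff (n : ℕ) : ∀ g₁ g₂ : ℝ → ℝ, ContDiff ℝ (n : ℕ∞) g₁ → ContDiff ℝ (n : ℕ∞) g₂ →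
    (∀ k : ℕ, k ≤ n → iteratedDeriv k g₁ 0 = iteratedDeriv k g₂ 0) →
    ContDiff ℝ (n : ℕ∞) (fun x => if x ≤ 0 then g₁ x else g₂ x) := by
  induction n with
  | zero =>
    intro g₁ g₂ h₁ h₂ hk
    have h0 : g₁ 0 = g₂ 0 := by simpa [iteratedDeriv_zero] using hk 0 le_rfl
    have : ContDiff ℝ (0 : WithTop ℕ∞) (fun x : ℝ => if x ≤ 0 then g₁ x else g₂ x) :=
      contDiff_zero.mpr ((h₁.continuous).if_le h₂.continuous continuous_id continuous_const
        (fun x hx => by rw [show x = 0 from hx, h0]))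
    exact_mod_cast this
  | succ m ih =>
    intro g₁ g₂ h₁ h₂ hk
    have h0 : g₁ 0 = g₂ 0 := by simpa [iteratedDeriv_zero] using hk 0 (Nat.zero_le _)
    have hd0 : deriv g₁ 0 = deriv g₂ 0 := by
      simpa [iteratedDeriv_one] using hk 1 (Nat.le_add_left 1 m)
    have h₁' : ContDiff ℝ ((m : WithTop ℕ∞) + 1) g₁ := by exact_mod_cast h₁
    have h₂' : ContDiff ℝ ((m : WithTop ℕ∞) + 1) g₂ := by exact_mod_cast h₂
    rw [contDiff_succ_iff_deriv] at h₁' h₂'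
    have hdiff₁ := h₁'.1
    have hdiff₂ := h₂'.1
    have hderiv : deriv (fun x => if x ≤ 0 then g₁ x else g₂ x)
        = fun x => if x ≤ 0 then deriv g₁ x else deriv g₂ x :=
      funext fun x => (glue_hasDerivAt g₁ g₂ hdiff₁ hdiff₂ h0 hd0 x).deriv
    have key : ContDiff ℝ (m : ℕ∞) (fun x => if x ≤ 0 then deriv g₁ x else deriv g₂ x) := by
      refine ih (deriv g₁) (deriv g₂) ?_ ?_ ?_
      · exact_mod_cast h₁'.2.2
      · exact_mod_cast h₂'.2.2
      · intro k hkm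
        have := hk (k + 1) (Nat.succ_le_succ hkm)
        rwa [iteratedDeriv_succ', iteratedDeriv_succ'] at this
    have : ContDiff ℝ ((m : WithTop ℕ∞) + 1) (fun x => if x ≤ 0 then g₁ x else g₂ x) := by
      rw [contDiff_succ_iff_deriv]
      refine ⟨fun x => (glue_hasDerivAt g₁ g₂ hdiff₁ hdiff₂ h0 hd0 x).differentiableAt, ?_, ?_⟩
      · intro h; exact absurd h (by simp)
      · rw [hderiv]; exact_mod_cast key
    exact_mod_cast this

lemma jets_eq (n : ℕ) (h g : ℝ → ℝ) (hh : ContDiff ℝ (n : ℕ∞) h) (hg : ContDiff ℝ (n : ℕ∞) g)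
    (s : Set ℝ) (hs : IsOpen s) (h0 : (0:ℝ) ∈ closure s) (heq : EqOn h g s) :
    ∀ k : ℕ, k ≤ n → iteratedDeriv k h 0 = iteratedDeriv k g 0 := by
  intro k hk
  have hkn : (k : WithTop ℕ∞) ≤ ((n : ℕ∞) : WithTop ℕ∞) := by exact_mod_cast hk
  have h1 : EqOn (iteratedDeriv k h) (iteratedDeriv k g) s := fun x hx =>
    Filter.EventuallyEq.iteratedDeriv_eq k (Filter.eventuallyEq_of_mem (hs.mem_nhds hx) heq)
  exact h1.closure (hh.continuous_iteratedDeriv k hkn) (hg.continuous_iteratedDeriv k hkn) h0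

lemma pow_ne_one' (a : ℝ) (ha : 0 < a) (ha1 : a ≠ 1) (m : ℕ) (hm : m ≠ 0) : a ^ m ≠ 1 := by
  rcases ha1.lt_or_gt with h|h
  · exact ne_of_lt (pow_lt_one₀ ha.le h hm)
  · exact ne_of_gt (one_lt_pow₀ h hm)

lemma glue_iff (a c₁ c₂ : ℝ) (ha : 0 < a) (ha1 : a ≠ 1) (hc₂ : c₂ ≠ 0) (n : ℕ) (hn : 2 ≤ n)
    (f : ℝ → ℝ) (hf : ContDiff ℝ (n : ℕ∞) f) (hd0 : deriv f 0 ≠ 0) (hf0 : f 0 = 0)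
    (q : ℝ → ℝ) (hqe : q = fun x => if x ≤ 0 then c₁ * f x else c₂ * f (a * x))
    (hq1 : ContDiff ℝ 1 q) :
    ContDiff ℝ (n : ℕ∞) q ↔ ∀ i : ℕ, 2 ≤ i → i ≤ n → iteratedDeriv i f 0 = 0 := by
  set g₁ : ℝ → ℝ := fun x => c₁ * f x with hg₁
  set g₂ : ℝ → ℝ := fun x => c₂ * f (a * x) with hg₂
  have hfk : ∀ k : ℕ, k ≤ n → ContDiff ℝ (k : ℕ∞) f := fun k hk =>
    hf.of_le (by exact_mod_cast hk)
  have hg₁k : ∀ k : ℕ, k ≤ n → ContDiff ℝ (k : ℕ∞) g₁ := fun k hk =>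
    contDiff_const.mul (hfk k hk)
  have hcomp : ∀ k : ℕ, k ≤ n → ContDiff ℝ (k : ℕ∞) (fun x : ℝ => f (a * x)) := fun k hk =>
    (hfk k hk).comp (contDiff_const.mul contDiff_id)
  have hg₂k : ∀ k : ℕ, k ≤ n → ContDiff ℝ (k : ℕ∞) g₂ := fun k hk =>
    contDiff_const.mul (hcomp k hk)
  have J₁ : ∀ k : ℕ, k ≤ n → iteratedDeriv k g₁ 0 = c₁ * iteratedDeriv k f 0 := by
    intro k hk
    have := iteratedDerivWithin_const_mul (mem_univ (0:ℝ)) uniqueDiffOn_univ c₁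
      (n := k) (by exact_mod_cast (hfk k hk).contDiffWithinAt)
    simp only [iteratedDerivWithin_univ] at this
    exact this
  have J₂ : ∀ k : ℕ, k ≤ n → iteratedDeriv k g₂ 0 = c₂ * a ^ k * iteratedDeriv k f 0 := by
    intro k hk
    have h1 := iteratedDerivWithin_const_mul (mem_univ (0:ℝ)) uniqueDiffOn_univ c₂
      (n := k) (by exact_mod_cast (hcomp k hk).contDiffWithinAt)
    have h2 : iteratedDeriv k (fun x : ℝ => f (a * x)) 0 = a ^ k * iteratedDeriv k f 0 := by
      have := congrFun (iteratedDeriv_comp_const_mul (n := k) (by exact_mod_cast hfk k hk) a) 0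
      simpa using this
    simp only [iteratedDerivWithin_univ] at h1
    rw [show iteratedDeriv k g₂ 0 = iteratedDeriv k (fun x : ℝ => c₂ * f (a * x)) 0 from rfl,
      h1, h2]
    ring
  have heq₁ : EqOn q g₁ (Iio 0) := fun x hx => by
    rw [hqe]; exact if_pos (le_of_lt hx)
  have heq₂ : EqOn q g₂ (Ioi 0) := fun x hx => by
    rw [hqe]; exact if_neg (not_le.mpr hx)
  have h0L : (0:ℝ) ∈ closure (Iio 0) := by rw [closure_Iio]; exact self_mem_Iic
  have h0R : (0:ℝ) ∈ closure (Ioi 0) := by rw [closure_Ioi]; exact self_mem_Ici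
  have hq1' : ContDiff ℝ ((1:ℕ) : ℕ∞) q := by exact_mod_cast hq1
  have h1n : (1:ℕ) ≤ n := le_trans one_le_two hn
  have hj1 : ∀ k : ℕ, k ≤ 1 → iteratedDeriv k g₁ 0 = iteratedDeriv k g₂ 0 := by
    intro k hk
    have hL := jets_eq 1 q g₁ hq1' (hg₁k 1 h1n) (Iio 0) isOpen_Iio h0L heq₁ k hk
    have hR := jets_eq 1 q g₂ hq1' (hg₂k 1 h1n) (Ioi 0) isOpen_Ioi h0R heq₂ k hk
    rw [← hL, hR]
  have hD1 : iteratedDeriv 1 f 0 = deriv f 0 := by rw [iteratedDeriv_one]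
  have key1 : c₁ = c₂ * a := by
    have h := hj1 1 le_rfl
    rw [J₁ 1 h1n, J₂ 1 h1n, hD1, pow_one] at h
    exact mul_right_cancel₀ hd0 h
  constructor
  · intro hqn i h2i hin
    have hL := jets_eq n q g₁ hqn (hg₁k n le_rfl) (Iio 0) isOpen_Iio h0L heq₁ i hin
    have hR := jets_eq n q g₂ hqn (hg₂k n le_rfl) (Ioi 0) isOpen_Ioi h0R heq₂ i hin
    have hEq : c₁ * iteratedDeriv i f 0 = c₂ * a ^ i * iteratedDeriv i f 0 := by
      rw [← J₁ i hin, ← J₂ i hin, ← hL, hR]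
    obtain ⟨j, rfl⟩ := Nat.exists_eq_add_of_le h2i
    have h2 : (c₂ * a - c₂ * a ^ (2 + j)) * iteratedDeriv (2 + j) f 0 = 0 := by
      rw [key1] at hEq; linear_combination hEq
    rcases mul_eq_zero.mp h2 with h3 | h3
    · exfalso
      have hc : c₂ * a = c₂ * a ^ (2 + j) := by linarith
      have ha' : a = a ^ (2 + j) := mul_left_cancel₀ hc₂ hc
      have hpow : a ^ (2 + j) = a * a ^ (1 + j) := by
        rw [show 2 + j = 1 + (1 + j) by omega, pow_add, pow_one]
      have : a * 1 = a * a ^ (1 + j) := by rw [mul_one, ← hpow]; exact ha'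
      have h4 : (1:ℝ) = a ^ (1 + j) := mul_left_cancel₀ (ne_of_gt ha) this
      exact pow_ne_one' a ha ha1 (1 + j) (by omega) h4.symm
    · exact h3
  · intro hz
    have hglue := glue_contDiff n g₁ g₂ (hg₁k n le_rfl) (hg₂k n le_rfl) ?_
    · rw [hqe]; exact hglue
    · intro k hk
      by_cases hk1 : k ≤ 1
      · exact hj1 k hk1
      · have h2k : 2 ≤ k := by omega
        rw [J₁ k hk, J₂ k hk, hz k h2k hk]
        ring

/-- For `a, b > 0` with `a, b ≠ 1`, `2 ≤ n`, and a `C^n` diffeomorphism `f` of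
`ℝ` with `f 0 = 0` such that `q = w_b ∘ f ∘ w_a` is `C¹`, the map `q` is `C^n`
iff `f''(0) = f'''(0) = ⋯ = f⁽ⁿ⁾(0) = 0`. -/
theorem wbfwa_Cn_iff (a b : ℝ) (ha : 0 < a) (hb : 0 < b)
    (ha1 : a ≠ 1) (hb1 : b ≠ 1) (n : ℕ) (hn : 2 ≤ n) (f : ℝ → ℝ)
    (hbij : Function.Bijective f) (hf : ContDiff ℝ (n : ℕ∞) f)
    (hderiv : ∀ x : ℝ, deriv f x ≠ 0) (hf0 : f 0 = 0)
    (hq1 : ContDiff ℝ 1 (wPL b ∘ f ∘ wPL a)) :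
    ContDiff ℝ (n : ℕ∞) (wPL b ∘ f ∘ wPL a) ↔
      ∀ i : ℕ, 2 ≤ i → i ≤ n → iteratedDeriv i f 0 = 0 := by
  rcases hf.continuous.strictMono_of_inj hbij.injective with hsm | hsa
  · -- increasing case
    have hqe : wPL b ∘ f ∘ wPL a = fun x => if x ≤ 0 then 1 * f x else b * f (a * x) := by
      funext x
      simp only [Function.comp_apply, wPL]
      by_cases hx : x ≤ 0
      · simp only [if_pos hx]
        have hfx : f x ≤ 0 := by rw [← hf0]; exact hsm.monotone hx
        rw [if_pos hfx, one_mul]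
      · simp only [if_neg hx]
        push_neg at hx
        have hfx : ¬ f (a * x) ≤ 0 := by
          rw [← hf0]; exact not_le.mpr (hsm (mul_pos ha hx))
        rw [if_neg hfx]
    exact glue_iff a 1 b ha ha1 (ne_of_gt hb) n hn f hf (hderiv 0) hf0 _ hqe hq1
  · -- decreasing case
    have hqe : wPL b ∘ f ∘ wPL a = fun x => if x ≤ 0 then b * f x else 1 * f (a * x) := by
      funext x
      simp only [Function.comp_apply, wPL]
      by_cases hx : x ≤ 0
      · simp only [if_pos hx]
        rcases lt_or_eq_of_le hx with hx' | hx'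
        · have hfx : ¬ f x ≤ 0 := by rw [← hf0]; exact not_le.mpr (hsa hx')
          rw [if_neg hfx]
        · subst hx'
          rw [hf0, if_pos le_rfl, mul_zero]
      · simp only [if_neg hx]
        push_neg at hx
        have hfx : f (a * x) ≤ 0 := by
          rw [← hf0]; exact le_of_lt (hsa (mul_pos ha hx))
        rw [if_pos hfx, one_mul]
    exact glue_iff a b 1 ha ha1 one_ne_zero n hn f hf (hderiv 0) hf0 _ hqe hq1
end

section
/- Let a, b > 0 with a, b ≠ 1, and D = { f ∈ Diff^k(ℝ) : f(0) = 0 } for some k ≥ 2 (or k = ∞). Define w_c(x) = x for x ≤ 0, c·x for x > 0. Then the set D ∩ w_b D w_a = { f ∈ D : w_{1/b} ∘ f ∘ w_{1/a} ∈ D } equals: the empty set if a ∉ {b, 1/b}; the group of orientation-preserving f ∈ D with f''(0) = ⋯ = f^{(k)}(0) = 0 if a·b = 1; and the set of orientation-reversing f ∈ D with f''(0) = ⋯ = f^{(k)}(0) = 0 if a = b. -/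
open Set

open Filter Topology

/-! ### Auxiliary gluing machinery -/

noncomputable def glueFn (g h : ℝ → ℝ) : ℝ → ℝ := fun x => if x ≤ 0 then g x else h x

lemma glueFn_left {g h : ℝ → ℝ} {x : ℝ} (hx : x ≤ 0) : glueFn g h x = g x := if_pos hx

lemma glueFn_right {g h : ℝ → ℝ} {x : ℝ} (hx : 0 < x) : glueFn g h x = h x := if_neg (not_le.2 hx)

lemma glueFn_ev_left {g h : ℝ → ℝ} {x : ℝ} (hx : x < 0) : glueFn g h =ᶠ[𝓝 x] g := by
  filter_upwards [Iio_mem_nhds hx] with y hy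
  exact glueFn_left hy.le

lemma glueFn_ev_right {g h : ℝ → ℝ} {x : ℝ} (hx : 0 < x) : glueFn g h =ᶠ[𝓝 x] h := by
  filter_upwards [Ioi_mem_nhds hx] with y hy
  exact glueFn_right hy

lemma glueFn_hasDerivAt_zero {g h : ℝ → ℝ} {L : ℝ} (h0 : g 0 = h 0)
    (hg : HasDerivAt g L 0) (hh : HasDerivAt h L 0) : HasDerivAt (glueFn g h) L 0 := by
  have h1 : HasDerivWithinAt (glueFn g h) L (Iic 0) 0 :=
    hg.hasDerivWithinAt.congr (fun y hy => glueFn_left hy) (glueFn_left le_rfl)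
  have h2 : HasDerivWithinAt (glueFn g h) L (Ici 0) 0 := by
    refine hh.hasDerivWithinAt.congr (fun y hy => ?_) (by rw [glueFn_left le_rfl, h0])
    rcases eq_or_lt_of_le (mem_Ici.1 hy) with hy' | hy'
    · rw [← hy', glueFn_left le_rfl, h0]
    · exact glueFn_right hy'
  have := h1.union h2
  rw [Iic_union_Ici] at this
  exact hasDerivWithinAt_univ.1 this

lemma glueFn_hasDerivAt {g h : ℝ → ℝ} (hg : Differentiable ℝ g) (hh : Differentiable ℝ h)
    (h0 : g 0 = h 0) (h1 : deriv g 0 = deriv h 0) (x : ℝ) :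
    HasDerivAt (glueFn g h) (glueFn (deriv g) (deriv h) x) x := by
  rcases lt_trichotomy x 0 with hx | rfl | hx
  · rw [glueFn_left hx.le]
    exact (hg x).hasDerivAt.congr_of_eventuallyEq (glueFn_ev_left hx)
  · rw [glueFn_left le_rfl]
    exact glueFn_hasDerivAt_zero h0 (hg 0).hasDerivAt (h1 ▸ (hh 0).hasDerivAt)
  · rw [glueFn_right hx]
    exact (hh x).hasDerivAt.congr_of_eventuallyEq (glueFn_ev_right hx)

lemma glueFn_differentiable {g h : ℝ → ℝ} (hg : Differentiable ℝ g) (hh : Differentiable ℝ h)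
    (h0 : g 0 = h 0) (h1 : deriv g 0 = deriv h 0) : Differentiable ℝ (glueFn g h) :=
  fun x => (glueFn_hasDerivAt hg hh h0 h1 x).differentiableAt

lemma glueFn_deriv {g h : ℝ → ℝ} (hg : Differentiable ℝ g) (hh : Differentiable ℝ h)
    (h0 : g 0 = h 0) (h1 : deriv g 0 = deriv h 0) :
    deriv (glueFn g h) = glueFn (deriv g) (deriv h) :=
  funext fun x => (glueFn_hasDerivAt hg hh h0 h1 x).deriv

section Aux
variable {F G g h : ℝ → ℝ} {x : ℝ}

lemma contDiff_deriv_of_succ {n : ℕ} (hF : ContDiff ℝ (n + 1 : ℕ) F) :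
    ContDiff ℝ (n : ℕ) (deriv F) := by
  have := (contDiff_succ_iff_deriv (n := (n : WithTop ℕ∞))).mp (by exact_mod_cast hF)
  exact this.2.2

lemma differentiable_of_succ {n : ℕ} (hF : ContDiff ℝ (n + 1 : ℕ) F) :
    Differentiable ℝ F :=
  hF.differentiable (by simp)

lemma mono_deriv_nonneg (hf : Monotone F) (hd : DifferentiableAt ℝ F x) : 0 ≤ deriv F x := by
  have h := hasDerivAt_iff_tendsto_slope.1 hd.hasDerivAt
  refine ge_of_tendsto h ?_
  filter_upwards [self_mem_nhdsWithin] with y hy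
  rcases lt_or_gt_of_ne (Ne.symm hy) with hxy | hxy
  · rw [slope_def_field]
    exact div_nonneg (by linarith [hf hxy.le]) (by linarith)
  · rw [slope_def_field, div_nonneg_iff]
    right
    exact ⟨by linarith [hf hxy.le], by linarith⟩

lemma anti_deriv_nonpos (hf : Antitone F) (hd : DifferentiableAt ℝ F x) : deriv F x ≤ 0 := by
  have h := hasDerivAt_iff_tendsto_slope.1 hd.hasDerivAt
  refine le_of_tendsto h ?_
  filter_upwards [self_mem_nhdsWithin] with y hy
  rcases lt_or_gt_of_ne (Ne.symm hy) with hxy | hxy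
  · rw [slope_def_field, div_nonpos_iff]
    right
    exact ⟨by linarith [hf hxy.le], by linarith⟩
  · rw [slope_def_field, div_nonpos_iff]
    left
    exact ⟨by linarith [hf hxy.le], by linarith⟩

lemma deriv_eq_on_Iic (h : ∀ y ≤ (0:ℝ), F y = G y) (hF : DifferentiableAt ℝ F 0)
    (hG : DifferentiableAt ℝ G 0) : deriv F 0 = deriv G 0 := by
  have u : UniqueDiffWithinAt ℝ (Iic (0:ℝ)) 0 := uniqueDiffOn_Iic 0 0 self_mem_Iic
  have h1 : HasDerivWithinAt G (deriv F 0) (Iic 0) 0 :=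
    hF.hasDerivAt.hasDerivWithinAt.congr (fun y hy => (h y hy).symm) (h 0 le_rfl).symm
  have h2 : HasDerivWithinAt G (deriv G 0) (Iic 0) 0 := hG.hasDerivAt.hasDerivWithinAt
  rw [← h1.derivWithin u, ← h2.derivWithin u]

lemma deriv_eq_on_Ici (h : ∀ y, (0:ℝ) ≤ y → F y = G y) (hF : DifferentiableAt ℝ F 0)
    (hG : DifferentiableAt ℝ G 0) : deriv F 0 = deriv G 0 := by
  have u : UniqueDiffWithinAt ℝ (Ici (0:ℝ)) 0 := uniqueDiffOn_Ici 0 0 self_mem_Ici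
  have h1 : HasDerivWithinAt G (deriv F 0) (Ici 0) 0 :=
    hF.hasDerivAt.hasDerivWithinAt.congr (fun y hy => (h y hy).symm) (h 0 le_rfl).symm
  have h2 : HasDerivWithinAt G (deriv G 0) (Ici 0) 0 := hG.hasDerivAt.hasDerivWithinAt
  rw [← h1.derivWithin u, ← h2.derivWithin u]

lemma iteratedDeriv_eq_on_Iic (n : ℕ) (h : ∀ y ≤ (0:ℝ), F y = G y)
    (hF : ContDiff ℝ (n : ℕ) F) (hG : ContDiff ℝ (n : ℕ) G) :
    ∀ i ≤ n, iteratedDeriv i F 0 = iteratedDeriv i G 0 := by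
  induction n generalizing F G with
  | zero =>
    intro i hi
    interval_cases i
    simpa [iteratedDeriv_zero] using h 0 le_rfl
  | succ n IH =>
    intro i hi
    rcases Nat.eq_zero_or_eq_succ_pred i with hi0 | hij
    · subst hi0; simpa [iteratedDeriv_zero] using h 0 le_rfl
    · rw [hij, iteratedDeriv_succ', iteratedDeriv_succ']
      have hd : ∀ y ≤ (0:ℝ), deriv F y = deriv G y := by
        intro y hy
        rcases eq_or_lt_of_le hy with rfl | hy'
        · exact deriv_eq_on_Iic h (differentiable_of_succ hF 0) (differentiable_of_succ hG 0)
        · refine Filter.EventuallyEq.deriv_eq ?_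
          filter_upwards [Iio_mem_nhds hy'] with z hz
          exact h z hz.le
      exact IH hd (contDiff_deriv_of_succ hF) (contDiff_deriv_of_succ hG) (i - 1) (by omega)

lemma iteratedDeriv_eq_on_Ici (n : ℕ) (h : ∀ y, (0:ℝ) ≤ y → F y = G y)
    (hF : ContDiff ℝ (n : ℕ) F) (hG : ContDiff ℝ (n : ℕ) G) :
    ∀ i ≤ n, iteratedDeriv i F 0 = iteratedDeriv i G 0 := by
  induction n generalizing F G with
  | zero =>
    intro i hi
    interval_cases i
    simpa [iteratedDeriv_zero] using h 0 le_rfl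
  | succ n IH =>
    intro i hi
    rcases Nat.eq_zero_or_eq_succ_pred i with hi0 | hij
    · subst hi0; simpa [iteratedDeriv_zero] using h 0 le_rfl
    · rw [hij, iteratedDeriv_succ', iteratedDeriv_succ']
      have hd : ∀ y, (0:ℝ) ≤ y → deriv F y = deriv G y := by
        intro y hy
        rcases eq_or_lt_of_le hy with rfl | hy'
        · exact deriv_eq_on_Ici h (differentiable_of_succ hF 0) (differentiable_of_succ hG 0)
        · refine Filter.EventuallyEq.deriv_eq ?_
          filter_upwards [Ioi_mem_nhds hy'] with z hz
          exact h z hz.le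
      exact IH hd (contDiff_deriv_of_succ hF) (contDiff_deriv_of_succ hG) (i - 1) (by omega)

lemma glueFn_contDiff (n : ℕ) (hg : ContDiff ℝ (n : ℕ) g) (hh : ContDiff ℝ (n : ℕ) h)
    (heq : ∀ i ≤ n, iteratedDeriv i g 0 = iteratedDeriv i h 0) :
    ContDiff ℝ (n : ℕ) (glueFn g h) := by
  induction n generalizing g h with
  | zero =>
    rw [show ((0:ℕ) : WithTop ℕ∞) = 0 by norm_cast, contDiff_zero]
    exact Continuous.if_le hg.continuous hh.continuous continuous_id continuous_const
      (fun x hx => by rw [hx]; simpa [iteratedDeriv_zero] using heq 0 le_rfl)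
  | succ n IH =>
    have hgd : Differentiable ℝ g :=
      hg.differentiable (by simp)
    have hhd : Differentiable ℝ h :=
      hh.differentiable (by simp)
    have h0 : g 0 = h 0 := by simpa [iteratedDeriv_zero] using heq 0 (by omega)
    have h1 : deriv g 0 = deriv h 0 := by simpa [iteratedDeriv_one] using heq 1 (by omega)
    rw [show ((n+1:ℕ) : WithTop ℕ∞) = (n : WithTop ℕ∞) + 1 by norm_cast]
    rw [contDiff_succ_iff_deriv]
    refine ⟨glueFn_differentiable hgd hhd h0 h1, fun hω => by simp at hω, ?_⟩
    rw [glueFn_deriv hgd hhd h0 h1]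
    exact IH (contDiff_deriv_of_succ hg) (contDiff_deriv_of_succ hh) (fun i hi => by
      have := heq (i+1) (by omega)
      rwa [iteratedDeriv_succ', iteratedDeriv_succ'] at this)

/-! ### Scaled functions -/

lemma hasDerivAt_scale (c d : ℝ) (hF : DifferentiableAt ℝ F (d * x)) :
    HasDerivAt (fun y => c * F (d * y)) (c * (deriv F (d * x) * d)) x := by
  have h1 : HasDerivAt (fun y : ℝ => d * y) d x := by
    simpa using (hasDerivAt_id x).const_mul d
  exact (hF.hasDerivAt.comp x h1).const_mul c

lemma hasDerivAt_compmul (d : ℝ) (hF : DifferentiableAt ℝ F (d * x)) :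
    HasDerivAt (fun y => F (d * y)) (deriv F (d * x) * d) x := by
  have h1 : HasDerivAt (fun y : ℝ => d * y) d x := by
    simpa using (hasDerivAt_id x).const_mul d
  exact hF.hasDerivAt.comp x h1

lemma contDiff_scale {n : WithTop ℕ∞} (c d : ℝ) (hF : ContDiff ℝ n F) :
    ContDiff ℝ n (fun y => c * F (d * y)) :=
  contDiff_const.mul (hF.comp ((contDiff_id).const_smul d))

lemma contDiff_compmul {n : WithTop ℕ∞} (d : ℝ) (hF : ContDiff ℝ n F) :
    ContDiff ℝ n (fun y => F (d * y)) :=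
  hF.comp ((contDiff_id).const_smul d)

lemma iteratedDeriv_scale (n : ℕ) (c d : ℝ) (hF : ContDiff ℝ (n : ℕ) F) :
    iteratedDeriv n (fun y => c * F (d * y)) 0 = c * (d ^ n * iteratedDeriv n F 0) := by
  have hcomp : ContDiff ℝ (n : ℕ) (fun y => F (d * y)) :=
    hF.comp ((contDiff_id).const_smul d)
  have h1 : iteratedDeriv n (fun y => c * F (d * y)) 0
      = c * iteratedDeriv n (fun y => F (d * y)) 0 := by
    rw [← iteratedDerivWithin_univ, ← iteratedDerivWithin_univ]
    exact iteratedDerivWithin_const_mul (mem_univ 0) uniqueDiffOn_univ c hcomp.contDiffAt.contDiffWithinAt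
  rw [h1, iteratedDeriv_comp_const_mul hF d]
  norm_num

lemma iteratedDeriv_cmul (n : ℕ) (c : ℝ) (hF : ContDiff ℝ (n : ℕ) F) :
    iteratedDeriv n (fun y => c * F y) 0 = c * iteratedDeriv n F 0 := by
  rw [← iteratedDerivWithin_univ, ← iteratedDerivWithin_univ]
  exact iteratedDerivWithin_const_mul (mem_univ 0) uniqueDiffOn_univ c hF.contDiffAt.contDiffWithinAt

lemma iteratedDeriv_compmul (n : ℕ) (d : ℝ) (hF : ContDiff ℝ (n : ℕ) F) :
    iteratedDeriv n (fun y => F (d * y)) 0 = d ^ n * iteratedDeriv n F 0 := by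
  rw [iteratedDeriv_comp_const_mul hF d]
  norm_num

end Aux

lemma pow_ne_one_aux {a : ℝ} (ha : 0 < a) (ha1 : a ≠ 1) {m : ℕ} (hm : m ≠ 0) : a ^ m ≠ 1 := by
  rcases lt_or_gt_of_ne ha1 with h | h
  · exact ne_of_lt (pow_lt_one₀ ha.le h hm)
  · exact ne_of_gt (one_lt_pow₀ h hm)

/-- `f` belongs to the group `D` of `C^k` diffeomorphisms of `ℝ` fixing `0`:
it is a bijection, `C^k`, with nowhere vanishing derivative (so its inverse is
`C^k` as well), and `f 0 = 0`. -/
def MemDGroup (k : ℕ∞) (f : ℝ → ℝ) : Prop :=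
  Function.Bijective f ∧ ContDiff ℝ k f ∧ (∀ x : ℝ, deriv f x ≠ 0) ∧ f 0 = 0

lemma wPL_le {c x : ℝ} (hx : x ≤ 0) : wPL c x = x := if_pos hx
lemma wPL_pos {c x : ℝ} (hx : 0 < x) : wPL c x = c * x := if_neg (not_le.2 hx)

lemma wPL_leftInv {c : ℝ} (hc : 0 < c) (x : ℝ) : wPL c⁻¹ (wPL c x) = x := by
  by_cases hx : x ≤ 0
  · rw [wPL_le hx, wPL_le hx]
  · push_neg at hx
    rw [wPL_pos hx, wPL_pos (mul_pos hc hx), ← mul_assoc, inv_mul_cancel₀ hc.ne', one_mul]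

lemma wPL_bijective {c : ℝ} (hc : 0 < c) : Function.Bijective (wPL c) := by
  refine Function.bijective_iff_has_inverse.2 ⟨wPL c⁻¹, wPL_leftInv hc, fun x => ?_⟩
  have := wPL_leftInv (inv_pos.2 hc) x
  rwa [inv_inv] at this
lemma forward {k : ℕ∞} (hk : 2 ≤ k) {a b : ℝ} (ha : 0 < a) (hb : 0 < b) (ha1 : a ≠ 1)
    {q f : ℝ → ℝ} (hq : MemDGroup k q) (hf : MemDGroup k f) (hqf : q = wPL b ∘ f ∘ wPL a) :
    (a * b = 1 ∧ 0 < deriv q 0 ∧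
      ∀ i : ℕ, 2 ≤ i → (i : ℕ∞) ≤ k → iteratedDeriv i q 0 = 0) ∨
    (a = b ∧ deriv q 0 < 0 ∧
      ∀ i : ℕ, 2 ≤ i → (i : ℕ∞) ≤ k → iteratedDeriv i q 0 = 0) := by
  obtain ⟨hqbij, hqs, hqd, hq0⟩ := hq
  obtain ⟨hfbij, hfs, hfd, hf0⟩ := hf
  have h1k : (1 : WithTop ℕ∞) ≤ (k : WithTop ℕ∞) := by
    exact_mod_cast le_trans one_le_two hk
  have hqdiff : DifferentiableAt ℝ q 0 := (hqs.differentiable (zero_lt_one.trans_le h1k).ne').differentiableAt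
  have hfdiff : DifferentiableAt ℝ f 0 := (hfs.differentiable (zero_lt_one.trans_le h1k).ne').differentiableAt
  have h1k' : ((1:ℕ) : ℕ∞) ≤ k := le_trans (by exact_mod_cast one_le_two) hk
  rcases hfs.continuous.strictMono_of_inj hfbij.1 with hm | hm
  · -- f strictly increasing
    have eqL : ∀ y ≤ (0:ℝ), q y = f y := by
      intro y hy
      rw [hqf]
      simp only [Function.comp_apply]
      rw [wPL_le hy, wPL_le (show f y ≤ 0 by rw [← hf0]; exact hm.monotone hy)]
    have eqR : ∀ y, (0:ℝ) ≤ y → q y = b * f (a * y) := by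
      intro y hy
      rw [hqf]
      simp only [Function.comp_apply]
      rcases eq_or_lt_of_le hy with rfl | hy'
      · rw [wPL_le le_rfl, mul_zero, hf0, wPL_le le_rfl, mul_zero]
      · rw [wPL_pos hy',
          wPL_pos (show 0 < f (a * y) by rw [← hf0]; exact hm (mul_pos ha hy'))]
    have key : ∀ i : ℕ, (i : ℕ∞) ≤ k →
        iteratedDeriv i q 0 = iteratedDeriv i f 0 ∧
        iteratedDeriv i q 0 = b * (a ^ i * iteratedDeriv i f 0) := by
      intro i hik
      have hqi : ContDiff ℝ (i:ℕ) q := hqs.of_le (by exact_mod_cast hik)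
      have hfi : ContDiff ℝ (i:ℕ) f := hfs.of_le (by exact_mod_cast hik)
      exact ⟨iteratedDeriv_eq_on_Iic i eqL hqi hfi i le_rfl,
        (iteratedDeriv_eq_on_Ici i eqR hqi (contDiff_scale b a hfi) i le_rfl).trans
          (iteratedDeriv_scale i b a hfi)⟩
    obtain ⟨e1, e2⟩ := key 1 h1k'
    simp only [iteratedDeriv_one, pow_one] at e1 e2
    have hab : a * b = 1 := by
      have hd0 := hfd 0
      apply mul_right_cancel₀ hd0
      rw [e1] at e2
      linear_combination -e2
    left
    refine ⟨hab, ?_, ?_⟩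
    · have hpos : 0 ≤ deriv q 0 := by
        rw [deriv_eq_on_Iic eqL hqdiff hfdiff]
        exact mono_deriv_nonneg hm.monotone hfdiff
      exact lt_of_le_of_ne hpos (hqd 0).symm
    · intro i h2i hik
      obtain ⟨e1, e2⟩ := key i hik
      have hfi0 : iteratedDeriv i f 0 = 0 := by
        by_contra hne
        have hba : b * a ^ i = 1 := by
          apply mul_right_cancel₀ hne
          rw [e1] at e2
          linear_combination -e2
        have hpow : a ^ i = a ^ (i - 1) * a := by
          rw [← pow_succ]
          congr 1
          omega
        have hone : a ^ (i - 1) = 1 := by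
          rw [hpow] at hba
          calc a ^ (i-1) = b * (a ^ (i-1) * a) := by
                rw [show b * (a^(i-1) * a) = a^(i-1) * (a*b) by ring, hab, mul_one]
          _ = 1 := hba
        exact pow_ne_one_aux ha ha1 (show i - 1 ≠ 0 by omega) hone
      rw [e1, hfi0]
  · -- f strictly decreasing
    have eqL : ∀ y ≤ (0:ℝ), q y = b * f y := by
      intro y hy
      rw [hqf]
      simp only [Function.comp_apply]
      rw [wPL_le hy]
      rcases eq_or_lt_of_le hy with rfl | hy'
      · rw [hf0, wPL_le le_rfl, mul_zero]
      · rw [wPL_pos (show 0 < f y by rw [← hf0]; exact hm hy')]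
    have eqR : ∀ y, (0:ℝ) ≤ y → q y = f (a * y) := by
      intro y hy
      rw [hqf]
      simp only [Function.comp_apply]
      rcases eq_or_lt_of_le hy with rfl | hy'
      · rw [wPL_le le_rfl, mul_zero, hf0, wPL_le le_rfl]
      · rw [wPL_pos hy', wPL_le (show f (a*y) ≤ 0 by rw [← hf0]; exact (hm (mul_pos ha hy')).le)]
    have key : ∀ i : ℕ, (i : ℕ∞) ≤ k →
        iteratedDeriv i q 0 = b * iteratedDeriv i f 0 ∧
        iteratedDeriv i q 0 = a ^ i * iteratedDeriv i f 0 := by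
      intro i hik
      have hqi : ContDiff ℝ (i:ℕ) q := hqs.of_le (by exact_mod_cast hik)
      have hfi : ContDiff ℝ (i:ℕ) f := hfs.of_le (by exact_mod_cast hik)
      constructor
      · have := iteratedDeriv_eq_on_Iic i eqL hqi (by simpa using contDiff_scale b 1 hfi) i le_rfl
        rw [this, show (fun y => b * f y) = (fun y => b * f (1 * y)) by simp,
          iteratedDeriv_scale i b 1 hfi]
        simp
      · have := iteratedDeriv_eq_on_Ici i eqR hqi (by simpa using contDiff_scale 1 a hfi) i le_rfl
        rw [this, show (fun y => f (a * y)) = (fun y => 1 * f (a * y)) by simp,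
          iteratedDeriv_scale i 1 a hfi]
        ring
    obtain ⟨e1, e2⟩ := key 1 h1k'
    simp only [iteratedDeriv_one, pow_one] at e1 e2
    have hab : a = b := by
      have hd0 := hfd 0
      apply mul_right_cancel₀ hd0
      linear_combination e1 - e2
    right
    refine ⟨hab, ?_, ?_⟩
    · have hneg : deriv f 0 < 0 :=
        lt_of_le_of_ne (anti_deriv_nonpos hm.antitone hfdiff) (hfd 0)
      rw [e1]
      exact mul_neg_of_pos_of_neg hb hneg
    · intro i h2i hik
      obtain ⟨e1, e2⟩ := key i hik
      have hfi0 : iteratedDeriv i f 0 = 0 := by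
        by_contra hne
        have hba : b = a ^ i := by
          apply mul_right_cancel₀ hne
          linear_combination e2 - e1
        have hpow : a ^ i = a ^ (i - 1) * a := by
          rw [← pow_succ]
          congr 1
          omega
        have hone : a ^ (i - 1) = 1 := by
          apply mul_right_cancel₀ ha.ne'
          rw [one_mul, ← hpow, ← hba, hab]
        exact pow_ne_one_aux ha ha1 (show i - 1 ≠ 0 by omega) hone
      rw [e1, hfi0, mul_zero]
lemma backward_mono {k : ℕ∞} (hk : 2 ≤ k) {a b : ℝ} (ha : 0 < a) (hb : 0 < b)
    (hab : a * b = 1) {q : ℝ → ℝ} (hq : MemDGroup k q) (h1 : 0 < deriv q 0)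
    (h2 : ∀ i : ℕ, 2 ≤ i → (i : ℕ∞) ≤ k → iteratedDeriv i q 0 = 0) :
    ∃ f, MemDGroup k f ∧ q = wPL b ∘ f ∘ wPL a := by
  obtain ⟨hqbij, hqs, hqd, hq0⟩ := hq
  have h1k : (1 : WithTop ℕ∞) ≤ (k : WithTop ℕ∞) := by exact_mod_cast le_trans one_le_two hk
  have hqdiffble : Differentiable ℝ q := hqs.differentiable (zero_lt_one.trans_le h1k).ne'
  have hmono : StrictMono q := by
    rcases hqs.continuous.strictMono_of_inj hqbij.1 with hm | hm
    · exact hm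
    · exact absurd (anti_deriv_nonpos hm.antitone (hqdiffble 0)) (not_le.2 h1)
  set h : ℝ → ℝ := fun y => b⁻¹ * q (a⁻¹ * y) with hh
  set f := glueFn q h with hf
  have hinv : b⁻¹ * a⁻¹ = 1 := by
    rw [show b⁻¹ * a⁻¹ = (a * b)⁻¹ by rw [mul_inv]; ring, hab, inv_one]
  have match_i : ∀ i : ℕ, (i : ℕ∞) ≤ k → iteratedDeriv i q 0 = iteratedDeriv i h 0 := by
    intro i hik
    have hqi : ContDiff ℝ (i:ℕ) q := hqs.of_le (by exact_mod_cast hik)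
    have hscale : iteratedDeriv i h 0 = b⁻¹ * ((a⁻¹) ^ i * iteratedDeriv i q 0) := by
      exact iteratedDeriv_scale i b⁻¹ a⁻¹ hqi
    rw [hscale]
    match i with
    | 0 => simp [iteratedDeriv_zero, hq0]
    | 1 =>
      simp only [iteratedDeriv_one, pow_one]
      linear_combination (-(deriv q 0)) * hinv
    | (j+2) => rw [h2 (j+2) (by omega) hik]; ring
  have hq0' : h 0 = 0 := by simp [hh, hq0]
  have hd10 : deriv q 0 = deriv h 0 := by
    simpa [iteratedDeriv_one] using match_i 1 (le_trans (by exact_mod_cast one_le_two) hk)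
  have hhdiffble : Differentiable ℝ h :=
    fun x => (hasDerivAt_scale b⁻¹ a⁻¹ (hqdiffble _)).differentiableAt
  have hcd : ContDiff ℝ k f := by
    rw [contDiff_iff_forall_nat_le]
    intro m hm
    refine glueFn_contDiff m (hqs.of_le (by exact_mod_cast hm))
      (contDiff_scale b⁻¹ a⁻¹ (hqs.of_le (by exact_mod_cast hm))) ?_
    intro i hi
    exact match_i i (le_trans (by exact_mod_cast hi) hm)
  have hderiv : deriv f = glueFn (deriv q) (deriv h) :=
    glueFn_deriv hqdiffble hhdiffble (hq0.trans hq0'.symm) hd10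
  have hderiv_h : ∀ x : ℝ, deriv h x = b⁻¹ * (deriv q (a⁻¹ * x) * a⁻¹) :=
    fun x => (hasDerivAt_scale b⁻¹ a⁻¹ (hqdiffble _)).deriv
  have hfd : ∀ x, deriv f x ≠ 0 := by
    intro x
    rw [hderiv]
    by_cases hx : x ≤ 0
    · rw [glueFn_left hx]; exact hqd x
    · push_neg at hx
      rw [glueFn_right hx, hderiv_h]
      exact mul_ne_zero (inv_ne_zero hb.ne') (mul_ne_zero (hqd _) (inv_ne_zero ha.ne'))
  have hfcomp : f = wPL b⁻¹ ∘ q ∘ wPL a⁻¹ := by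
    funext x
    simp only [Function.comp_apply]
    by_cases hx : x ≤ 0
    · rw [hf, glueFn_left hx, wPL_le hx,
        wPL_le (show q x ≤ 0 by rw [← hq0]; exact hmono.monotone hx)]
    · push_neg at hx
      have hax : 0 < a⁻¹ * x := mul_pos (inv_pos.2 ha) hx
      have hqx : 0 < q (a⁻¹ * x) := by rw [← hq0]; exact hmono hax
      rw [hf, glueFn_right hx, wPL_pos hx, wPL_pos hqx]
  have hfbij : Function.Bijective f := by
    rw [hfcomp]
    exact ((wPL_bijective (inv_pos.2 hb)).comp hqbij).comp (wPL_bijective (inv_pos.2 ha))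
  refine ⟨f, ⟨hfbij, hcd, hfd, by rw [hf, glueFn_left le_rfl, hq0]⟩, ?_⟩
  funext x
  simp only [Function.comp_apply]
  by_cases hx : x ≤ 0
  · rw [wPL_le hx, hf, glueFn_left hx,
      wPL_le (show q x ≤ 0 by rw [← hq0]; exact hmono.monotone hx)]
  · push_neg at hx
    have hax : 0 < a * x := mul_pos ha hx
    have hqx : 0 < q x := by rw [← hq0]; exact hmono hx
    have hxx : a⁻¹ * (a * x) = x := by field_simp
    rw [wPL_pos hx, hf, glueFn_right hax, hh]
    simp only []
    rw [hxx, wPL_pos (mul_pos (inv_pos.2 hb) hqx), ← mul_assoc, mul_inv_cancel₀ hb.ne', one_mul]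
lemma backward_anti {k : ℕ∞} (hk : 2 ≤ k) {a b : ℝ} (ha : 0 < a) (hb : 0 < b)
    (hab : a = b) {q : ℝ → ℝ} (hq : MemDGroup k q) (h1 : deriv q 0 < 0)
    (h2 : ∀ i : ℕ, 2 ≤ i → (i : ℕ∞) ≤ k → iteratedDeriv i q 0 = 0) :
    ∃ f, MemDGroup k f ∧ q = wPL b ∘ f ∘ wPL a := by
  subst hab
  obtain ⟨hqbij, hqs, hqd, hq0⟩ := hq
  have h1k : (1 : WithTop ℕ∞) ≤ (k : WithTop ℕ∞) := by exact_mod_cast le_trans one_le_two hk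
  have hqdiffble : Differentiable ℝ q := hqs.differentiable (zero_lt_one.trans_le h1k).ne'
  have hanti : StrictAnti q := by
    rcases hqs.continuous.strictMono_of_inj hqbij.1 with hm | hm
    · exact absurd (mono_deriv_nonneg hm.monotone (hqdiffble 0)) (not_le.2 h1)
    · exact hm
  set g : ℝ → ℝ := fun y => a⁻¹ * q y with hg
  set h : ℝ → ℝ := fun y => q (a⁻¹ * y) with hh
  set f := glueFn g h with hf
  have match_i : ∀ i : ℕ, (i : ℕ∞) ≤ k → iteratedDeriv i g 0 = iteratedDeriv i h 0 := by
    intro i hik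
    have hqi : ContDiff ℝ (i:ℕ) q := hqs.of_le (by exact_mod_cast hik)
    rw [hg, hh, iteratedDeriv_cmul i a⁻¹ hqi, iteratedDeriv_compmul i a⁻¹ hqi]
    match i with
    | 0 => simp [iteratedDeriv_zero, hq0]
    | 1 => rw [pow_one]
    | (j+2) => rw [h2 (j+2) (by omega) hik]; ring
  have hq00 : g 0 = h 0 := by simp [hg, hh, hq0]
  have hdg : ∀ x : ℝ, deriv g x = a⁻¹ * deriv q x :=
    fun x => (((hqdiffble x).hasDerivAt).const_mul a⁻¹).deriv
  have hdh : ∀ x : ℝ, deriv h x = deriv q (a⁻¹ * x) * a⁻¹ :=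
    fun x => (hasDerivAt_compmul a⁻¹ (hqdiffble _)).deriv
  have hgdiffble : Differentiable ℝ g := fun x => ((hqdiffble x).hasDerivAt.const_mul a⁻¹).differentiableAt
  have hhdiffble : Differentiable ℝ h := fun x => (hasDerivAt_compmul a⁻¹ (hqdiffble _)).differentiableAt
  have hd10 : deriv g 0 = deriv h 0 := by
    rw [hdg, hdh, mul_zero, mul_comm]
  have hcd : ContDiff ℝ k f := by
    rw [contDiff_iff_forall_nat_le]
    intro m hm
    refine glueFn_contDiff m (contDiff_const.mul (hqs.of_le (by exact_mod_cast hm)))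
      (contDiff_compmul a⁻¹ (hqs.of_le (by exact_mod_cast hm))) ?_
    intro i hi
    exact match_i i (le_trans (by exact_mod_cast hi) hm)
  have hderiv : deriv f = glueFn (deriv g) (deriv h) :=
    glueFn_deriv hgdiffble hhdiffble hq00 hd10
  have hfd : ∀ x, deriv f x ≠ 0 := by
    intro x
    rw [hderiv]
    by_cases hx : x ≤ 0
    · rw [glueFn_left hx, hdg]
      exact mul_ne_zero (inv_ne_zero ha.ne') (hqd x)
    · push_neg at hx
      rw [glueFn_right hx, hdh]
      exact mul_ne_zero (hqd _) (inv_ne_zero ha.ne')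
  have hfcomp : f = wPL a⁻¹ ∘ q ∘ wPL a⁻¹ := by
    funext x
    simp only [Function.comp_apply]
    rcases lt_trichotomy x 0 with hx | rfl | hx
    · have hqx : 0 < q x := by rw [← hq0]; exact hanti hx
      rw [hf, glueFn_left hx.le, wPL_le hx.le, wPL_pos hqx]
    · rw [hf, glueFn_left le_rfl, wPL_le le_rfl, hq0, wPL_le le_rfl, hg]
      simp [hq0]
    · have hax : 0 < a⁻¹ * x := mul_pos (inv_pos.2 ha) hx
      have hqx : q (a⁻¹ * x) < 0 := by rw [← hq0]; exact hanti hax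
      rw [hf, glueFn_right hx, wPL_pos hx, wPL_le hqx.le]
  have hfbij : Function.Bijective f := by
    rw [hfcomp]
    exact ((wPL_bijective (inv_pos.2 ha)).comp hqbij).comp (wPL_bijective (inv_pos.2 ha))
  have hf00 : f 0 = 0 := by rw [hf, glueFn_left le_rfl, hg]; simp [hq0]
  refine ⟨f, ⟨hfbij, hcd, hfd, hf00⟩, ?_⟩
  funext x
  simp only [Function.comp_apply]
  rcases lt_trichotomy x 0 with hx | rfl | hx
  · have hqx : 0 < q x := by rw [← hq0]; exact hanti hx
    rw [wPL_le hx.le, hf, glueFn_left hx.le, hg]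
    simp only []
    rw [wPL_pos (mul_pos (inv_pos.2 ha) hqx), ← mul_assoc, mul_inv_cancel₀ ha.ne', one_mul]
  · rw [wPL_le le_rfl, hf, glueFn_left le_rfl, hg]
    simp [hq0, wPL_le le_rfl]
  · have hax : 0 < a * x := mul_pos ha hx
    have hxx : a⁻¹ * (a * x) = x := by field_simp
    have hqx : q x < 0 := by rw [← hq0]; exact hanti hx
    rw [wPL_pos hx, hf, glueFn_right hax, hh]
    simp only []
    rw [hxx, wPL_le hqx.le]

/-- Computation of `D ∩ w_b D w_a` for `a, b > 0`, `a, b ≠ 1`, `k ≥ 2`: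
it is empty if `a ∉ {b, 1/b}`; it is the set of orientation-preserving
`f ∈ D` with `f''(0) = ⋯ = f⁽ᵏ⁾(0) = 0` if `a·b = 1`; and it is the set of
orientation-reversing `f ∈ D` with `f''(0) = ⋯ = f⁽ᵏ⁾(0) = 0` if `a = b`. -/
theorem D_inter_wb_D_wa (k : ℕ∞) (hk : 2 ≤ k) (a b : ℝ) (ha : 0 < a)
    (hb : 0 < b) (ha1 : a ≠ 1) (hb1 : b ≠ 1) :
    (a ≠ b → a * b ≠ 1 →
      {q : ℝ → ℝ | MemDGroup k q ∧ ∃ f, MemDGroup k f ∧ q = wPL b ∘ f ∘ wPL a}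
        = ∅) ∧
    (a * b = 1 →
      {q : ℝ → ℝ | MemDGroup k q ∧ ∃ f, MemDGroup k f ∧ q = wPL b ∘ f ∘ wPL a}
        = {q : ℝ → ℝ | MemDGroup k q ∧ 0 < deriv q 0 ∧
            ∀ i : ℕ, 2 ≤ i → (i : ℕ∞) ≤ k → iteratedDeriv i q 0 = 0}) ∧
    (a = b →
      {q : ℝ → ℝ | MemDGroup k q ∧ ∃ f, MemDGroup k f ∧ q = wPL b ∘ f ∘ wPL a}
        = {q : ℝ → ℝ | MemDGroup k q ∧ deriv q 0 < 0 ∧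
            ∀ i : ℕ, 2 ≤ i → (i : ℕ∞) ≤ k → iteratedDeriv i q 0 = 0}) := by
  have hsq : ∀ c : ℝ, 0 < c → c ≠ 1 → c * c ≠ 1 := by
    intro c hc hc1 hcc
    have h : (c - 1) * (c + 1) = 0 := by linear_combination hcc
    rcases mul_eq_zero.1 h with h' | h'
    · exact hc1 (by linarith)
    · linarith
  refine ⟨?_, ?_, ?_⟩
  · intro hne hab1
    rw [eq_empty_iff_forall_notMem]
    rintro q ⟨hq, f, hf, hqf⟩
    rcases forward hk ha hb ha1 hq hf hqf with ⟨h', _, _⟩ | ⟨h', _, _⟩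
    · exact hab1 h'
    · exact hne h'
  · intro hab
    ext q
    simp only [Set.mem_setOf_eq]
    constructor
    · rintro ⟨hq, f, hf, hqf⟩
      rcases forward hk ha hb ha1 hq hf hqf with ⟨_, hd, hi⟩ | ⟨hab', _, _⟩
      · exact ⟨hq, hd, hi⟩
      · rw [hab'] at hab
        exact absurd hab (hsq b hb hb1)
    · rintro ⟨hq, hd, hi⟩
      exact ⟨hq, backward_mono hk ha hb hab hq hd hi⟩
  · intro hab
    ext q
    simp only [Set.mem_setOf_eq]
    constructor
    · rintro ⟨hq, f, hf, hqf⟩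
      rcases forward hk ha hb ha1 hq hf hqf with ⟨hab', _, _⟩ | ⟨_, hd, hi⟩
      · rw [← hab] at hab'
        exact absurd hab' (hsq a ha ha1)
      · exact ⟨hq, hd, hi⟩
    · rintro ⟨hq, hd, hi⟩
      exact ⟨hq, backward_anti hk ha hb hab hq hd hi⟩
end
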